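/- For r ≥ 2, define the polynomials f_r(t) = ½[(1+t)^r(1+t²) − (1−t)^r(1−t²)] and h_r(t) = (1+t³)^r, and Q(t) = t² f_r(t) − h_r(t). Then t·Q(t) = (1−t⁴)(−t + a(t) + b(t)), where a(t) = Σ_{k≥1} C(r,2k+1) t^{2k+4} (1−t^{4k})/(1−t⁴) and b(t) = Σ_{k≥1} C(r,2k+2) t^{2k+7} (1−t^{4k})/(1−t⁴). -/
import Mathlib


open Polynomial Finset

/-- `f_r(t) = ½[(1+t)^r(1+t²) − (1−t)^r(1−t²)]`. -/
noncomputable def fPoly (r : ℕ) : Polynomial ℚ :=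
  Polynomial.C (1/2 : ℚ) *
    ((1 + Polynomial.X) ^ r * (1 + Polynomial.X ^ 2) -
     (1 - Polynomial.X) ^ r * (1 - Polynomial.X ^ 2))

/-- `h_r(t) = (1+t³)^r`. -/
noncomputable def hPoly (r : ℕ) : Polynomial ℚ := (1 + Polynomial.X ^ 3) ^ r

/-- `a(t) = Σ_{k≥1} C(r,2k+1) t^{2k+4} (1 + t⁴ + ... + t^{4k-4})`. -/
noncomputable def aPoly (r : ℕ) : Polynomial ℚ :=
  ∑ k ∈ Finset.Icc 1 r, Polynomial.C (r.choose (2*k+1) : ℚ) * Polynomial.X ^ (2*k+4) *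
    ∑ j ∈ Finset.range k, Polynomial.X ^ (4*j)

/-- `b(t) = Σ_{k≥1} C(r,2k+2) t^{2k+7} (1 + t⁴ + ... + t^{4k-4})`. -/
noncomputable def bPoly (r : ℕ) : Polynomial ℚ :=
  ∑ k ∈ Finset.Icc 1 r, Polynomial.C (r.choose (2*k+2) : ℚ) * Polynomial.X ^ (2*k+7) *
    ∑ j ∈ Finset.range k, Polynomial.X ^ (4*j)

/-- Summand in the expansion of `t³f − th`. -/
noncomputable def termL (r i : ℕ) : Polynomial ℚ :=
  C (1/2:ℚ) * C (r.choose i : ℚ) * (1 - (-1:ℚ[X])^i) * X^(i+3)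
  + C (1/2:ℚ) * C (r.choose i : ℚ) * (1 + (-1:ℚ[X])^i) * X^(i+5)
  - C (r.choose i : ℚ) * X^(3*i+1)

/-- Paired summand. -/
noncomputable def gP (r k : ℕ) : Polynomial ℚ :=
  C (r.choose (2*k+1):ℚ) * (X^(2*k+4) - X^(6*k+4))
  + C (r.choose (2*k+2):ℚ) * (X^(2*k+7) - X^(6*k+7))

lemma hhalf : Polynomial.C (1/2:ℚ) * 2 = 1 := by
  rw [show ((2:ℚ[X])) = Polynomial.C 2 from (map_ofNat Polynomial.C 2).symm, ← C_mul]
  norm_num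

lemma sum_range_pair {M : Type*} [AddCommMonoid M] (f : ℕ → M) (n : ℕ) :
    ∑ i ∈ Finset.range (2*n), f i = ∑ k ∈ Finset.range n, (f (2*k) + f (2*k+1)) := by
  induction n with
  | zero => simp
  | succ n ih =>
    rw [Finset.sum_range_succ, ← ih, show 2*(n+1) = 2*n+1+1 by ring,
      Finset.sum_range_succ, Finset.sum_range_succ, add_assoc]

lemma lhs_eq (r : ℕ) : X * (X^2 * fPoly r - hPoly r) = ∑ i ∈ range (r+1), termL r i := by
  have hA : (1 + X:ℚ[X])^r = ∑ i ∈ range (r+1), C (r.choose i:ℚ) * X^i := by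
    rw [add_comm, add_pow]
    refine Finset.sum_congr rfl fun i _ => ?_
    simp [mul_comm]
  have hB : (1 - X:ℚ[X])^r = ∑ i ∈ range (r+1), C ((-1:ℚ)^i * r.choose i) * X^i := by
    rw [sub_eq_add_neg, add_comm, add_pow]
    refine Finset.sum_congr rfl fun i _ => ?_
    rw [neg_pow]
    simp [mul_comm, mul_assoc, mul_left_comm]
  have hH : hPoly r = ∑ i ∈ range (r+1), C (r.choose i:ℚ) * X^(3*i) := by
    rw [hPoly, add_comm, add_pow]
    refine Finset.sum_congr rfl fun i _ => ?_
    simp [← pow_mul, mul_comm]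
  rw [fPoly, hA, hB, hH]
  simp only [Finset.sum_mul, Finset.mul_sum, mul_sub, sub_mul, ← Finset.sum_sub_distrib]
  refine Finset.sum_congr rfl fun i _ => ?_
  rw [termL]
  simp only [C_mul, C_pow, C_neg, C_1, map_natCast]
  ring

lemma pair_eq (r k : ℕ) : termL r (2*k+1) + termL r (2*k+2) = gP r k := by
  have e1 : (-1:ℚ[X])^(2*k+1) = -1 := by
    rw [pow_succ, pow_mul]; simp
  have e2 : (-1:ℚ[X])^(2*k+2) = 1 := by
    rw [pow_add, pow_mul]; simp
  rw [termL, termL, gP, e1, e2]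
  linear_combination (C (r.choose (2*k+1):ℚ) * X^(2*k+4)
    + C (r.choose (2*k+2):ℚ) * X^(2*k+7)) * hhalf

lemma geom4 (k : ℕ) : (1 - X^4 : ℚ[X]) * ∑ j ∈ Finset.range k, X^(4*j) = 1 - X^(4*k) := by
  have h := geom_sum_mul (X^4 : ℚ[X]) k
  have h2 : ∑ j ∈ Finset.range k, (X:ℚ[X])^(4*j) = ∑ j ∈ Finset.range k, ((X:ℚ[X])^4)^j := by
    refine Finset.sum_congr rfl fun j _ => ?_; rw [← pow_mul, mul_comm]
  rw [h2, show (X:ℚ[X])^(4*k) = ((X:ℚ[X])^4)^k by rw [← pow_mul, mul_comm]]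
  linear_combination -h

/-- The identity `t·Q(t) = (1−t⁴)(−t + a(t) + b(t))` where
`Q(t) = t² f_r(t) − h_r(t)`. -/
theorem tQ_factorization (r : ℕ) (hr : 2 ≤ r) :
    Polynomial.X * (Polynomial.X ^ 2 * fPoly r - hPoly r) =
      (1 - Polynomial.X ^ 4) * (- Polynomial.X + aPoly r + bPoly r) := by
  have ha : (1 - X^4:ℚ[X]) * aPoly r
      = ∑ k ∈ Icc 1 r, C (r.choose (2*k+1):ℚ) * (X^(2*k+4) - X^(6*k+4)) := by
    rw [aPoly, Finset.mul_sum]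
    refine Finset.sum_congr rfl fun k _ => ?_
    linear_combination (C (r.choose (2*k+1):ℚ) * X^(2*k+4)) * geom4 k
  have hb : (1 - X^4:ℚ[X]) * bPoly r
      = ∑ k ∈ Icc 1 r, C (r.choose (2*k+2):ℚ) * (X^(2*k+7) - X^(6*k+7)) := by
    rw [bPoly, Finset.mul_sum]
    refine Finset.sum_congr rfl fun k _ => ?_
    linear_combination (C (r.choose (2*k+2):ℚ) * X^(2*k+7)) * geom4 k
  have hg : ∑ k ∈ Icc 1 r, gP r k
      = (∑ k ∈ Icc 1 r, C (r.choose (2*k+1):ℚ) * (X^(2*k+4) - X^(6*k+4)))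
      + ∑ k ∈ Icc 1 r, C (r.choose (2*k+2):ℚ) * (X^(2*k+7) - X^(6*k+7)) := by
    simp only [gP]
    rw [Finset.sum_add_distrib]
  have hrhs : (1 - X^4:ℚ[X]) * (-X + aPoly r + bPoly r)
      = -X + X^5 + ∑ k ∈ Icc 1 r, gP r k := by
    linear_combination ha + hb - hg
  have hsub : ∑ k ∈ Icc 1 r, gP r k = ∑ k ∈ range (r+2), gP r k := by
    apply Finset.sum_subset
    · intro k hk
      simp only [Finset.mem_Icc] at hk
      simp only [Finset.mem_range]
      omega
    · intro k hk hnk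
      simp only [Finset.mem_Icc, not_and, not_le] at hnk
      rw [gP]
      rcases Nat.eq_zero_or_pos k with h0 | hpos
      · subst h0; norm_num
      · have hrk : r < k := hnk hpos
        rw [Nat.choose_eq_zero_of_lt (by omega), Nat.choose_eq_zero_of_lt (by omega)]
        simp
  have h0 : termL r 0 = X^5 - X := by
    rw [termL]
    norm_num
    linear_combination hhalf
  have hext : ∑ i ∈ range (r+1), termL r i = ∑ i ∈ range (2*(r+2)+1), termL r i := by
    apply Finset.sum_subset
    · intro x hx
      simp only [Finset.mem_range] at *
      omega
    · intro i hi hni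
      simp only [Finset.mem_range, not_lt] at hni
      rw [termL, Nat.choose_eq_zero_of_lt (by omega)]
      simp
  have hlhs : X * (X^2 * fPoly r - hPoly r) = -X + X^5 + ∑ k ∈ range (r+2), gP r k := by
    rw [lhs_eq r, hext, Finset.sum_range_succ', sum_range_pair]
    rw [h0]
    have hpair : ∀ m : ℕ, ∑ x ∈ Finset.range m, (termL r (2*x+1) + termL r (2*x+1+1)) = ∑ x ∈ Finset.range m, gP r x := fun m => Finset.sum_congr rfl fun k _ => pair_eq r k
    rw [hpair]
    ring
  rw [hlhs, hrhs, hsub]
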